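/- arXiv:1503.05507 — 3 statements merged into one kernel-verified Lean document; each statement's English description precedes it below -/
import Mathlib

section
/- Let λ ∈ ℝ, r > 0, ε > 0 with ε ≤ r/4, and let f be holomorphic on the open disc D(λ, r) = {z ∈ ℂ : |z − λ| < r}, satisfying |f(z)| ≤ ε and |f'(z)| ≤ 1/2 for all z ∈ D(λ, r), and f(conj z) = conj(f(z)) for all z ∈ D(λ, r). Then there is exactly one point z̃ ∈ D(λ, r) with z̃ = λ + f(z̃); moreover z̃ is real and |z̃ − λ| ≤ ε. -/
/-!
The map `g z = λ + f z` is `1/2`-Lipschitz on the disc by the mean value inequality, and it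
maps the closed disc of radius `ε` about `λ` into itself because `‖f‖ ≤ ε`. Banach's fixed
point theorem on that closed disc gives `z̃`, and contraction makes it the only fixed point in
the whole disc. Since `f` commutes with conjugation and the disc is centred on the real axis,
`conj z̃` is a fixed point in the disc as well, so `conj z̃ = z̃`.
-/

open Metric Set Function NNReal ComplexConjugate

section FixedPoint

variable {X : Type*} [MetricSpace X] {g : X → X} {K : ℝ≥0} {s : Set X}

theorem LipschitzOnWith.eq_of_isFixedPt (hg : LipschitzOnWith K g s) (hK : K < 1)
    {x y : X} (hx : x ∈ s) (hy : y ∈ s) (hfx : IsFixedPt g x) (hfy : IsFixedPt g y) :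
    x = y := by
  have hle : dist x y ≤ K * dist x y := by
    simpa only [hfx.eq, hfy.eq] using hg.dist_le_mul x hx y hy
  have hK' : (K : ℝ) < 1 := by exact_mod_cast hK
  exact dist_le_zero.1 (by nlinarith [dist_nonneg (x := x) (y := y)])

theorem LipschitzOnWith.exists_isFixedPt_mem [CompleteSpace X] (hg : LipschitzOnWith K g s)
    (hK : K < 1) (hs : IsClosed s) (hmaps : MapsTo g s s) {x : X} (hx : x ∈ s) :
    ∃ z ∈ s, IsFixedPt g z :=
  have hcontr : ContractingWith K (hmaps.restrict g s s) := ⟨hK, hg.mapsToRestrict hmaps⟩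
  let ⟨z, hzs, hfz, _⟩ := hcontr.exists_fixedPoint' hs.isComplete hmaps hx (edist_ne_top _ _)
  ⟨z, hzs, hfz⟩

end FixedPoint

theorem Complex.conj_mem_ball_ofReal {x r : ℝ} {z : ℂ} (hz : z ∈ ball (x : ℂ) r) :
    conj z ∈ ball (x : ℂ) r := by
  rwa [mem_ball, ← Complex.conj_ofReal, Complex.dist_conj_conj]

theorem real_fixed_point_of_small_holomorphic_perturbation_general
    (lam : ℝ) (r ε : ℝ) (hε : 0 < ε) (hεr : ε ≤ r / 4)
    (f : ℂ → ℂ)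
    (hf : DifferentiableOn ℂ f (Metric.ball (lam : ℂ) r))
    (hbound : ∀ z ∈ Metric.ball (lam : ℂ) r, ‖f z‖ ≤ ε)
    (hderiv : ∀ z ∈ Metric.ball (lam : ℂ) r, ‖deriv f z‖ ≤ 1 / 2)
    (hconj : ∀ z ∈ Metric.ball (lam : ℂ) r,
      f ((starRingEnd ℂ) z) = (starRingEnd ℂ) (f z)) :
    ∃ zt : ℂ, (zt ∈ Metric.ball (lam : ℂ) r ∧ zt = lam + f zt)
      ∧ zt.im = 0
      ∧ ‖zt - lam‖ ≤ ε
      ∧ ∀ w ∈ Metric.ball (lam : ℂ) r, w = lam + f w → w = zt := by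
  set g : ℂ → ℂ := fun z ↦ lam + f z
  have hlip : LipschitzOnWith (1 / 2) g (ball (lam : ℂ) r) :=
    (convex_ball _ _).lipschitzOnWith_of_nnnorm_deriv_le
      (fun z hz ↦ ((hf z hz).differentiableAt (isOpen_ball.mem_nhds hz)).const_add _)
      (fun z hz ↦ by
        rw [← NNReal.coe_le_coe, coe_nnnorm, deriv_const_add]
        exact_mod_cast hderiv z hz)
  have hsub : closedBall (lam : ℂ) ε ⊆ ball (lam : ℂ) r := closedBall_subset_ball (by linarith)
  have hmaps : MapsTo g (closedBall (lam : ℂ) ε) (closedBall (lam : ℂ) ε) := fun z hz ↦ by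
    simpa [g, mem_closedBall_iff_norm] using hbound z (hsub hz)
  obtain ⟨zt, hzt, hfix⟩ := (hlip.mono hsub).exists_isFixedPt_mem (by norm_num) isClosed_closedBall
    hmaps (mem_closedBall_self hε.le)
  have huniq : ∀ w ∈ ball (lam : ℂ) r, w = lam + f w → w = zt := fun w hw hfw ↦
    hlip.eq_of_isFixedPt (by norm_num) hw (hsub hzt) hfw.symm hfix
  refine ⟨zt, ⟨hsub hzt, hfix.symm⟩, ?_, mem_closedBall_iff_norm.1 hzt, huniq⟩
  rw [← Complex.conj_eq_iff_im]
  refine huniq _ (Complex.conj_mem_ball_ofReal (hsub hzt)) ?_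
  rw [hconj zt (hsub hzt)]
  conv_lhs => rw [← hfix.eq]
  simp [g]

/-- **Real fixed point of a small holomorphic perturbation.**
Let `λ ∈ ℝ`, `r > 0`, `0 < ε ≤ r/4`, and let `f` be holomorphic on the disc
`D(λ, r)` with `|f| ≤ ε`, `|f'| ≤ 1/2` there, and `f(conj z) = conj (f z)`.
Then there is exactly one `z̃ ∈ D(λ, r)` with `z̃ = λ + f(z̃)`; it is real and
satisfies `|z̃ − λ| ≤ ε`. -/
theorem real_fixed_point_of_small_holomorphic_perturbation
    (lam : ℝ) (r ε : ℝ) (hr : 0 < r) (hε : 0 < ε) (hεr : ε ≤ r / 4)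
    (f : ℂ → ℂ)
    (hf : DifferentiableOn ℂ f (Metric.ball (lam : ℂ) r))
    (hbound : ∀ z ∈ Metric.ball (lam : ℂ) r, ‖f z‖ ≤ ε)
    (hderiv : ∀ z ∈ Metric.ball (lam : ℂ) r, ‖deriv f z‖ ≤ 1 / 2)
    (hconj : ∀ z ∈ Metric.ball (lam : ℂ) r,
      f ((starRingEnd ℂ) z) = (starRingEnd ℂ) (f z)) :
    ∃ zt : ℂ, (zt ∈ Metric.ball (lam : ℂ) r ∧ zt = lam + f zt)
      ∧ zt.im = 0
      ∧ ‖zt - lam‖ ≤ ε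
      ∧ ∀ w ∈ Metric.ball (lam : ℂ) r, w = lam + f w → w = zt :=
  real_fixed_point_of_small_holomorphic_perturbation_general lam r ε hε hεr f hf hbound hderiv hconj
end

section
/- Let λ ∈ ℝ, r > 0, ε > 0 with ε ≤ r/4, and let f be holomorphic on the open disc D(λ, r) with |f(z)| ≤ ε and |f'(z)| ≤ 1/2 for all z ∈ D(λ, r). Let z̃ denote the unique solution in D(λ, r) of z̃ = λ + f(z̃). Then for any radius ρ with 2ε < ρ < r, the function g(z) := z − λ − f(z) does not vanish on the circle |z − λ| = ρ, z̃ is its unique zero in the disc |z − λ| < ρ, one has g'(z̃) = 1 − f'(z̃) ≠ 0, and (1/(2πi)) ∮_{|z−λ|=ρ} dz/(z − λ − f(z)) = 1/(1 − f'(z̃)). -/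
/-!
Since `|f'| ≤ 1/2`, the map `z ↦ z - f z` is injective on the disc, so `z̃` is the only zero of
`g z = z - λ - f z`; and `|f| ≤ ε < ρ` keeps the zeros of `g` off the circle `|z - λ| = ρ`.
Writing `g z = (z - z̃) G z` with `G = dslope g z̃`, the function `G` is holomorphic and zero-free on
the closed disc, with `G z̃ = g'(z̃) = 1 - f'(z̃)`, so Cauchy's integral formula applied to `1 / G`
gives the residue.
-/

open Metric Complex

theorem Convex.injOn_id_sub_of_norm_deriv_le {𝕜 : Type*} [RCLike 𝕜] {f : 𝕜 → 𝕜} {s : Set 𝕜}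
    {C : ℝ} (hs : Convex ℝ s) (hf : ∀ x ∈ s, DifferentiableAt 𝕜 f x) (hC : C < 1)
    (bound : ∀ x ∈ s, ‖deriv f x‖ ≤ C) : Set.InjOn (fun x => x - f x) s := by
  intro x hx y hy hxy
  have hdiff : y - x = f y - f x := by linear_combination -(hxy : x - f x = y - f y)
  have hlip := hs.norm_image_sub_le_of_norm_deriv_le hf bound hx hy
  rw [← hdiff] at hlip
  have hnorm : ‖y - x‖ = 0 := by nlinarith [norm_nonneg (y - x)]
  exact (sub_eq_zero.mp (norm_eq_zero.mp hnorm)).symm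

theorem circleIntegral_inv_eq_two_pi_I_div_deriv {g : ℂ → ℂ} {c w : ℂ} {R : ℝ}
    (hg : DifferentiableOn ℂ g (closedBall c R)) (hw : w ∈ ball c R) (hgw : g w = 0)
    (hzero : ∀ z ∈ closedBall c R, g z = 0 → z = w) (hg' : deriv g w ≠ 0) :
    (∮ z in C(c, R), (g z)⁻¹) = 2 * Real.pi * I / deriv g w := by
  set G := dslope g w
  have hfactor : ∀ z, g z = (z - w) * G z := fun z => by
    simpa [hgw] using (sub_smul_dslope g w z).symm
  have hGw : G w = deriv g w := dslope_same g w
  have hG_ne : ∀ z ∈ closedBall c R, G z ≠ 0 := by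
    intro z hz hGz
    by_cases hzw : z = w
    · exact hg' (hGw ▸ hzw ▸ hGz)
    · exact hzw (hzero z hz (by rw [hfactor, hGz, mul_zero]))
  have hGd : DifferentiableOn ℂ G (closedBall c R) :=
    (Complex.differentiableOn_dslope (closedBall_mem_nhds_of_mem hw)).2 hg
  have hcauchy : (∮ z in C(c, R), (z - w)⁻¹ • (G z)⁻¹) = (2 * Real.pi * I : ℂ) • (G w)⁻¹ :=
    (hGd.inv hG_ne).circleIntegral_sub_inv_smul hw
  have hintegrand : (fun z => (g z)⁻¹) = fun z => (z - w)⁻¹ • (G z)⁻¹ := by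
    funext z
    rw [hfactor, mul_inv, smul_eq_mul]
  rw [hintegrand, hcauchy, hGw, smul_eq_mul, div_eq_mul_inv]

theorem residue_at_simple_perturbed_pole_general
    (lam : ℝ) (r ε : ℝ)
    (f : ℂ → ℂ)
    (hf : DifferentiableOn ℂ f (Metric.ball (lam : ℂ) r))
    (hbound : ∀ z ∈ Metric.ball (lam : ℂ) r, ‖f z‖ ≤ ε)
    (hderiv : ∀ z ∈ Metric.ball (lam : ℂ) r, ‖deriv f z‖ ≤ 1 / 2)
    (zt : ℂ) (hzt : zt ∈ Metric.ball (lam : ℂ) r) (hfix : zt = lam + f zt)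
    (ρ : ℝ) (hρ₁ : 2 * ε < ρ) (hρ₂ : ρ < r) :
    (∀ z : ℂ, ‖z - lam‖ = ρ → z - lam - f z ≠ 0)
    ∧ (‖zt - lam‖ < ρ ∧ zt - lam - f zt = 0)
    ∧ (∀ z : ℂ, ‖z - lam‖ < ρ → z - lam - f z = 0 → z = zt)
    ∧ deriv (fun z => z - lam - f z) zt = 1 - deriv f zt
    ∧ 1 - deriv f zt ≠ 0
    ∧ (∮ z in C((lam : ℂ), ρ), (z - lam - f z)⁻¹)
      = 2 * Real.pi * Complex.I / (1 - deriv f zt) := by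
  have hf_at : ∀ z ∈ ball (lam : ℂ) r, DifferentiableAt ℂ f z := fun z hz =>
    hf.differentiableAt (isOpen_ball.mem_nhds hz)
  have hε : 0 ≤ ε := (norm_nonneg _).trans (hbound zt hzt)
  have hzero : zt - lam - f zt = 0 := by linear_combination hfix
  have hzt_near : ‖zt - lam‖ < ρ := by
    rw [show zt - lam = f zt by linear_combination hfix]
    linarith [hbound zt hzt]
  have hsphere : ∀ z : ℂ, ‖z - lam‖ = ρ → z - lam - f z ≠ 0 := fun z hz h0 => by
    have hfz := hbound z (mem_ball_iff_norm.2 (hz ▸ hρ₂))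
    rw [show f z = z - lam by linear_combination -h0, hz] at hfz
    linarith
  have huniq : ∀ z ∈ ball (lam : ℂ) r, z - lam - f z = 0 → z = zt := fun z hz h0 =>
    (convex_ball _ _).injOn_id_sub_of_norm_deriv_le hf_at (by norm_num) hderiv hz hzt
      (by linear_combination h0 - hzero)
  have hg' : HasDerivAt (fun z => z - lam - f z) (1 - deriv f zt) zt :=
    ((hasDerivAt_id zt).sub_const _).sub (hf_at zt hzt).hasDerivAt
  have hne : 1 - deriv f zt ≠ 0 := fun h => by
    have h' := hderiv zt hzt
    rw [← sub_eq_zero.mp h, norm_one] at h'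
    norm_num at h'
  have hclosed : closedBall (lam : ℂ) ρ ⊆ ball (lam : ℂ) r := closedBall_subset_ball hρ₂
  refine ⟨hsphere, ⟨hzt_near, hzero⟩,
    fun z hz => huniq z (ball_subset_ball hρ₂.le (mem_ball_iff_norm.2 hz)), hg'.deriv, hne, ?_⟩
  rw [← hg'.deriv]
  exact circleIntegral_inv_eq_two_pi_I_div_deriv
    (((differentiableOn_id.sub_const _).sub hf).mono hclosed) (mem_ball_iff_norm.2 hzt_near)
    hzero (fun z hz => huniq z (hclosed hz)) (hg'.deriv ▸ hne)

/-- **Residue computation at a simple perturbed pole.**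
Let `λ ∈ ℝ`, `r > 0`, `0 < ε ≤ r/4`, `f` holomorphic on `D(λ, r)` with
`|f| ≤ ε`, `|f'| ≤ 1/2`, and let `z̃ ∈ D(λ, r)` solve `z̃ = λ + f(z̃)`.
Then for any `ρ` with `2ε < ρ < r`, the function `g(z) = z − λ − f(z)` does
not vanish on `|z − λ| = ρ`, `z̃` is its unique zero in `|z − λ| < ρ`,
`g'(z̃) = 1 − f'(z̃) ≠ 0`, and
`(1/(2πi)) ∮_{|z−λ|=ρ} dz/(z − λ − f(z)) = 1/(1 − f'(z̃))`. -/
theorem residue_at_simple_perturbed_pole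
    (lam : ℝ) (r ε : ℝ) (hr : 0 < r) (hε : 0 < ε) (hεr : ε ≤ r / 4)
    (f : ℂ → ℂ)
    (hf : DifferentiableOn ℂ f (Metric.ball (lam : ℂ) r))
    (hbound : ∀ z ∈ Metric.ball (lam : ℂ) r, ‖f z‖ ≤ ε)
    (hderiv : ∀ z ∈ Metric.ball (lam : ℂ) r, ‖deriv f z‖ ≤ 1 / 2)
    (zt : ℂ) (hzt : zt ∈ Metric.ball (lam : ℂ) r) (hfix : zt = lam + f zt)
    (ρ : ℝ) (hρ₁ : 2 * ε < ρ) (hρ₂ : ρ < r) :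
    (∀ z : ℂ, ‖z - lam‖ = ρ → z - lam - f z ≠ 0)
    ∧ (‖zt - lam‖ < ρ ∧ zt - lam - f zt = 0)
    ∧ (∀ z : ℂ, ‖z - lam‖ < ρ → z - lam - f z = 0 → z = zt)
    ∧ deriv (fun z => z - lam - f z) zt = 1 - deriv f zt
    ∧ 1 - deriv f zt ≠ 0
    ∧ (∮ z in C((lam : ℂ), ρ), (z - lam - f z)⁻¹)
      = 2 * Real.pi * Complex.I / (1 - deriv f zt) :=
  residue_at_simple_perturbed_pole_general lam r ε f hf hbound hderiv zt hzt hfix ρ hρ₁ hρ₂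
end

section
/- Let λ₁, …, λ_m ∈ ℝ, Λ = diag(λ₁, …, λ_m) ∈ M_m(ℂ), c ∈ ℝ, and r > d > 0 such that |λ_j − c| ≤ r − d for all j. Let M be a continuous M_m(ℂ)-valued function on the circle |z − c| = r with ‖M(z)‖ ≤ ε ≤ d/2 for all z on the circle. Then for every α ∈ ℂ^m, the matrix zI − Λ + M(z) is invertible for every z on the circle, and |(1/(2πi)) ∮_{|z−c|=r} ⟨(zI − Λ + M(z))⁻¹ α, α⟩ dz − ‖α‖²| ≤ (2 r ε / d²) ‖α‖². -/
/-!
On the circle `|z - c| = r` every `λ_j` is at distance at least `d`, so the diagonal resolvent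
`D(z) = (z - Λ)⁻¹` has norm at most `1/d`. Since `‖M(z)‖ ≤ d/2`, the perturbed matrix
`z - Λ + M(z)` is invertible with inverse of norm at most `2/d`, and the resolvent identity
`(D + M)⁻¹ - D⁻¹ = -(D + M)⁻¹ M D⁻¹` shows that the two inverses differ by at most `2ε/d²`.
The quadratic form of the diagonal resolvent is `∑ |α_j|² / (z - λ_j)`, whose contour integral is
`2πi ‖α‖²` by Cauchy's formula since every `λ_j` lies inside the circle; the error term
integrates to at most `2πr · 2ε/d² · ‖α‖²`.
-/

open Matrix Metric

section NormedRing

variable {R : Type*} [NormedRing R] {a e : R} {K ε : ℝ}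

theorem isUnit_add_of_norm_inverse_mul_lt_one [HasSummableGeomSeries R] (ha : IsUnit a)
    (h : ‖Ring.inverse a‖ * ‖e‖ < 1) : IsUnit (a + e) := by
  have hfactor : a + e = a * (1 - -(Ring.inverse a * e)) := by
    rw [sub_neg_eq_add, mul_add, mul_one, ← mul_assoc, Ring.mul_inverse_cancel a ha, one_mul]
  rw [hfactor]
  exact ha.mul (Units.oneSub _ (by rw [norm_neg]; exact (norm_mul_le _ _).trans_lt h)).isUnit

theorem Ring.inverse_add_sub_inverse (ha : IsUnit a) (hae : IsUnit (a + e)) :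
    Ring.inverse (a + e) - Ring.inverse a = -(Ring.inverse (a + e) * e * Ring.inverse a) := by
  rw [Ring.inverse_sub_inverse (iff_of_true hae ha), sub_add_cancel_left, mul_neg, neg_mul]

theorem norm_inverse_add_le (ha : IsUnit a) (hae : IsUnit (a + e)) (hK : ‖Ring.inverse a‖ ≤ K)
    (he : ‖e‖ ≤ ε) (hKε : K * ε ≤ 1 / 2) : ‖Ring.inverse (a + e)‖ ≤ 2 * K := by
  have hK0 : 0 ≤ K := (norm_nonneg _).trans hK
  have hε0 : 0 ≤ ε := (norm_nonneg _).trans he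
  have hb : Ring.inverse (a + e) = Ring.inverse a - Ring.inverse (a + e) * e * Ring.inverse a := by
    rw [sub_eq_add_neg, ← Ring.inverse_add_sub_inverse ha hae]
    abel
  set b := Ring.inverse (a + e)
  have : ‖b‖ ≤ K + ‖b‖ * (1 / 2) :=
    calc ‖b‖ ≤ ‖Ring.inverse a‖ + ‖b * e * Ring.inverse a‖ := by
          nth_rewrite 1 [hb]; exact norm_sub_le _ _
      _ ≤ K + ‖b‖ * ε * K := by gcongr; exact norm_mul₃_le.trans (by gcongr)
      _ ≤ K + ‖b‖ * (1 / 2) := by rw [mul_assoc]; gcongr; linarith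
  linarith

theorem norm_inverse_add_sub_inverse_le (ha : IsUnit a) (hae : IsUnit (a + e))
    (hK : ‖Ring.inverse a‖ ≤ K) (he : ‖e‖ ≤ ε) (hKε : K * ε ≤ 1 / 2) :
    ‖Ring.inverse (a + e) - Ring.inverse a‖ ≤ 2 * K ^ 2 * ε := by
  have hK0 : 0 ≤ K := (norm_nonneg _).trans hK
  have hε0 : 0 ≤ ε := (norm_nonneg _).trans he
  rw [Ring.inverse_add_sub_inverse ha hae, norm_neg]
  calc ‖Ring.inverse (a + e) * e * Ring.inverse a‖
      ≤ ‖Ring.inverse (a + e)‖ * ‖e‖ * ‖Ring.inverse a‖ := norm_mul₃_le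
    _ ≤ 2 * K * ε * K := by gcongr; exact norm_inverse_add_le ha hae hK he hKε
    _ = 2 * K ^ 2 * ε := by ring

end NormedRing

theorem Matrix.inv_diagonal_of_ne_zero {n α : Type*} [Fintype n] [DecidableEq n] [Field α]
    {v : n → α} (hv : ∀ j, v j ≠ 0) : (diagonal v)⁻¹ = diagonal fun j => (v j)⁻¹ :=
  inv_eq_right_inv <| by simp [diagonal_mul_diagonal, hv]

theorem ContinuousOn.matrix_inv {X n 𝕜 : Type*} [TopologicalSpace X] [Fintype n] [DecidableEq n]
    [NormedField 𝕜] [CompleteSpace 𝕜] {A : X → Matrix n n 𝕜} {s : Set X}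
    (hA : ContinuousOn A s) (hunit : ∀ x ∈ s, IsUnit (A x)) :
    ContinuousOn (fun x => (A x)⁻¹) s := fun x hx =>
  (continuousAt_matrix_inv _ (NormedRing.inverse_continuousAt
    ((isUnit_iff_isUnit_det _).1 (hunit x hx)).unit)).comp_continuousWithinAt (hA x hx)

theorem Matrix.sum_diagonal_mulVec_mul_conj {n 𝕜 : Type*} [Fintype n] [DecidableEq n] [RCLike 𝕜]
    (v : n → 𝕜) (x : EuclideanSpace 𝕜 n) :
    ∑ j, (diagonal v *ᵥ x) j * starRingEnd 𝕜 (x j) = ∑ j, (‖x j‖ ^ 2 : 𝕜) * v j := by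
  simp [mulVec_diagonal, mul_assoc, RCLike.mul_conj, mul_comm]

section L2Operator

open scoped Matrix.Norms.L2Operator

variable {n 𝕜 : Type*} [Fintype n] [DecidableEq n] [RCLike 𝕜] {v : n → 𝕜} {E : Matrix n n 𝕜}
  {d ε : ℝ}

theorem Matrix.norm_inv_diagonal_le (hd : 0 < d) (hv : ∀ j, d ≤ ‖v j‖) :
    ‖(diagonal v)⁻¹‖ ≤ d⁻¹ := by
  rw [inv_diagonal_of_ne_zero fun j => norm_pos_iff.1 (hd.trans_le (hv j)), l2_opNorm_diagonal]
  refine (pi_norm_le_iff_of_nonneg (by positivity)).2 fun j => ?_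
  rw [norm_inv]
  exact inv_anti₀ hd (hv j)

theorem Matrix.isUnit_diagonal_of_le_norm (hd : 0 < d) (hv : ∀ j, d ≤ ‖v j‖) :
    IsUnit (diagonal v) :=
  isUnit_diagonal.2 <| Pi.isUnit_iff.2 fun j => (norm_pos_iff.1 (hd.trans_le (hv j))).isUnit

theorem Matrix.isUnit_diagonal_add (hd : 0 < d) (hv : ∀ j, d ≤ ‖v j‖) (hE : ‖E‖ ≤ ε)
    (hε : ε ≤ d / 2) : IsUnit (diagonal v + E) := by
  refine isUnit_add_of_norm_inverse_mul_lt_one (isUnit_diagonal_of_le_norm hd hv) ?_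
  rw [← nonsing_inv_eq_ringInverse]
  calc ‖(diagonal v)⁻¹‖ * ‖E‖ ≤ d⁻¹ * ε :=
        mul_le_mul (norm_inv_diagonal_le hd hv) hE (norm_nonneg _) (by positivity)
    _ < 1 := by rw [inv_mul_lt_iff₀ hd]; linarith

theorem Matrix.norm_inv_diagonal_add_sub_inv_le (hd : 0 < d) (hv : ∀ j, d ≤ ‖v j‖)
    (hE : ‖E‖ ≤ ε) (hε : ε ≤ d / 2) :
    ‖(diagonal v + E)⁻¹ - (diagonal v)⁻¹‖ ≤ 2 * ε / d ^ 2 := by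
  have hdinv := norm_inv_diagonal_le hd hv
  simp only [nonsing_inv_eq_ringInverse] at hdinv ⊢
  convert norm_inverse_add_sub_inverse_le (isUnit_diagonal_of_le_norm hd hv)
    (isUnit_diagonal_add hd hv hE hε) hdinv hE (by rw [inv_mul_le_iff₀ hd]; linarith) using 1
  field_simp

theorem Matrix.norm_sum_mulVec_mul_conj_le (B : Matrix n n 𝕜) (x : EuclideanSpace 𝕜 n) :
    ‖∑ j, (B *ᵥ x) j * starRingEnd 𝕜 (x j)‖ ≤ ‖B‖ * ‖x‖ ^ 2 :=
  calc _ = ‖inner 𝕜 x (toEuclideanCLM (n := n) (𝕜 := 𝕜) B x)‖ := by simp [PiLp.inner_apply]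
    _ ≤ ‖x‖ * ‖toEuclideanCLM (n := n) (𝕜 := 𝕜) B x‖ := norm_inner_le_norm _ _
    _ ≤ ‖x‖ * (‖B‖ * ‖x‖) := by gcongr; exact (toEuclideanCLM (n := n) (𝕜 := 𝕜) B).le_opNorm x
    _ = ‖B‖ * ‖x‖ ^ 2 := by ring

theorem Matrix.norm_sum_inv_diagonal_add_mulVec_mul_conj_sub_le (hd : 0 < d)
    (hv : ∀ j, d ≤ ‖v j‖) (hE : ‖E‖ ≤ ε) (hε : ε ≤ d / 2) (x : EuclideanSpace 𝕜 n) :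
    ‖∑ j, ((diagonal v + E)⁻¹ *ᵥ x) j * starRingEnd 𝕜 (x j) - ∑ j, (‖x j‖ ^ 2 : 𝕜) * (v j)⁻¹‖
      ≤ 2 * ε / d ^ 2 * ‖x‖ ^ 2 :=
  calc _ = ‖∑ j, (((diagonal v + E)⁻¹ - (diagonal v)⁻¹) *ᵥ x) j * starRingEnd 𝕜 (x j)‖ := by
        rw [inv_diagonal_of_ne_zero fun j => norm_pos_iff.1 (hd.trans_le (hv j)),
          ← sum_diagonal_mulVec_mul_conj, ← Finset.sum_sub_distrib]
        simp only [sub_mulVec, Pi.sub_apply, sub_mul]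
    _ ≤ ‖(diagonal v + E)⁻¹ - (diagonal v)⁻¹‖ * ‖x‖ ^ 2 := norm_sum_mulVec_mul_conj_le _ _
    _ ≤ 2 * ε / d ^ 2 * ‖x‖ ^ 2 := by gcongr; exact norm_inv_diagonal_add_sub_inv_le hd hv hE hε

end L2Operator

theorem le_dist_of_mem_sphere_of_mem_closedBall {X : Type*} [PseudoMetricSpace X] {x y c : X}
    {r d : ℝ} (hx : x ∈ sphere c r) (hy : y ∈ closedBall c (r - d)) : d ≤ dist x y := by
  linarith [dist_triangle_right x c y, mem_sphere.1 hx, mem_closedBall'.1 hy]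

theorem circleIntegrable_sub_inv_of_mem_ball {c p : ℂ} {R : ℝ} (hp : p ∈ ball c R) :
    CircleIntegrable (fun z => (z - p)⁻¹) c R := by
  refine circleIntegrable_sub_inv_iff.2 (Or.inr fun h => ?_)
  rw [abs_of_pos (nonempty_ball.1 ⟨p, hp⟩)] at h
  exact (mem_ball.1 hp).ne (mem_sphere.1 h)

theorem circleIntegral_sum_mul_sub_inv {ι : Type*} (s : Finset ι) (w p : ι → ℂ) {c : ℂ} {R : ℝ}
    (hp : ∀ i ∈ s, p i ∈ ball c R) :
    ∮ z in C(c, R), ∑ i ∈ s, w i * (z - p i)⁻¹ = 2 * Real.pi * Complex.I * ∑ i ∈ s, w i := by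
  rw [circleIntegral.integral_fun_sum (f := fun i z => w i * (z - p i)⁻¹)
    fun i hi => (circleIntegrable_sub_inv_of_mem_ball (hp i hi)).const_mul _, Finset.mul_sum]
  refine Finset.sum_congr rfl fun i hi => ?_
  rw [circleIntegral.integral_const_mul, circleIntegral.integral_sub_inv_of_mem_ball (hp i hi),
    mul_comm]

theorem norm_two_pi_I_inv_smul_circleIntegral_sub_le {E : Type*} [NormedAddCommGroup E]
    [NormedSpace ℂ E] {f g : ℂ → E} {c : ℂ} {R C : ℝ} (hR : 0 ≤ R) (hf : CircleIntegrable f c R)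
    (hg : CircleIntegrable g c R) (hfg : ∀ z ∈ sphere c R, ‖f z - g z‖ ≤ C) :
    ‖(2 * Real.pi * Complex.I)⁻¹ • (∮ z in C(c, R), f z)
      - (2 * Real.pi * Complex.I)⁻¹ • ∮ z in C(c, R), g z‖ ≤ R * C := by
  rw [← smul_sub, ← circleIntegral.integral_sub hf hg, norm_smul]
  calc _ ≤ ‖(2 * Real.pi * Complex.I)⁻¹‖ * (2 * Real.pi * R * C) := by
        gcongr; exact circleIntegral.norm_integral_le_of_norm_le_const hR hfg
    _ = R * C := by
        simp only [norm_inv, norm_mul, Complex.norm_two, Complex.norm_real, Complex.norm_I,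
          Real.norm_eq_abs, abs_of_pos Real.pi_pos, mul_one]
        field_simp

/-- **Contour integral of the effective resolvent over a large circle.**
Let `Λ = diag(λ₁, …, λ_m)` with `λ_j ∈ ℝ`, `|λ_j − c| ≤ r − d`, `0 < d < r`,
and let `M` be a continuous matrix-valued function on the circle `|z − c| = r`
with `‖M(z)‖ ≤ ε ≤ d/2` there. Then for each `α ∈ ℂ^m`, the matrix
`zI − Λ + M(z)` is invertible on the circle and
`|(1/(2πi)) ∮ ⟨(zI − Λ + M(z))⁻¹ α, α⟩ dz − ‖α‖²| ≤ (2rε/d²) ‖α‖²`. -/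
theorem contour_integral_effective_resolvent
    (m : ℕ) (lam : Fin m → ℝ) (c : ℝ) (r d ε : ℝ)
    (hd : 0 < d) (hdr : d < r)
    (hlam : ∀ j, |lam j - c| ≤ r - d)
    (M : ℂ → Matrix (Fin m) (Fin m) ℂ)
    (hMcont : ContinuousOn M (Metric.sphere (c : ℂ) r))
    (hMnorm : ∀ z ∈ Metric.sphere (c : ℂ) r,
      ‖Matrix.toEuclideanCLM (𝕜 := ℂ) (n := Fin m) (M z)‖ ≤ ε)
    (hε : ε ≤ d / 2)
    (α : EuclideanSpace ℂ (Fin m)) :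
    (∀ z ∈ Metric.sphere (c : ℂ) r,
      IsUnit (z • (1 : Matrix (Fin m) (Fin m) ℂ)
        - Matrix.diagonal (fun j => (lam j : ℂ)) + M z))
    ∧ ‖((2 * Real.pi * Complex.I)⁻¹
        * (∮ z in C((c : ℂ), r),
            ∑ j, ((z • (1 : Matrix (Fin m) (Fin m) ℂ)
                - Matrix.diagonal (fun j => (lam j : ℂ)) + M z)⁻¹.mulVec α) j
              * (starRingEnd ℂ) (α j))
        - (‖α‖ : ℂ) ^ 2)‖
      ≤ 2 * r * ε / d ^ 2 * ‖α‖ ^ 2 := by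
  have hlam_mem (j) : (lam j : ℂ) ∈ closedBall (c : ℂ) (r - d) := by
    rw [mem_closedBall, Complex.isometry_ofReal.dist_eq, Real.dist_eq]; exact hlam j
  have hball (j) : (lam j : ℂ) ∈ ball (c : ℂ) r := closedBall_subset_ball (by linarith) (hlam_mem j)
  have hdist : ∀ z ∈ sphere (c : ℂ) r, ∀ j, d ≤ ‖z - lam j‖ := fun z hz j =>
    dist_eq_norm z (lam j) ▸ le_dist_of_mem_sphere_of_mem_closedBall hz (hlam_mem j)
  have hA (z : ℂ) : z • (1 : Matrix (Fin m) (Fin m) ℂ) - diagonal (fun j => (lam j : ℂ)) + M z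
      = diagonal (fun j => z - lam j) + M z := by
    rw [smul_one_eq_diagonal, diagonal_sub]
  have hunit : ∀ z ∈ sphere (c : ℂ) r,
      IsUnit (z • (1 : Matrix (Fin m) (Fin m) ℂ) - diagonal (fun j => (lam j : ℂ)) + M z) :=
    fun z hz => hA z ▸ isUnit_diagonal_add hd (hdist z hz) (hMnorm z hz) hε
  refine ⟨hunit, ?_⟩
  set f : ℂ → ℂ := fun z => ∑ j, ((z • (1 : Matrix (Fin m) (Fin m) ℂ)
      - diagonal (fun j => (lam j : ℂ)) + M z)⁻¹.mulVec α) j * (starRingEnd ℂ) (α j)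
  set g : ℂ → ℂ := fun z => ∑ j, (‖α j‖ ^ 2 : ℂ) * (z - lam j)⁻¹
  have hf : CircleIntegrable f c r := by
    have := ContinuousOn.matrix_inv (by fun_prop) hunit
    exact ContinuousOn.circleIntegrable (hd.trans hdr).le (by fun_prop)
  have hg : CircleIntegrable g c r :=
    .fun_sum _ fun j _ => (circleIntegrable_sub_inv_of_mem_ball (hball j)).const_mul _
  have hfg : ∀ z ∈ sphere (c : ℂ) r, ‖f z - g z‖ ≤ 2 * ε / d ^ 2 * ‖α‖ ^ 2 := fun z hz => by
    simp only [f, g, hA z]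
    exact norm_sum_inv_diagonal_add_mulVec_mul_conj_sub_le hd (hdist z hz) (hMnorm z hz) hε α
  have hg_int : (2 * Real.pi * Complex.I)⁻¹ * ∮ z in C((c : ℂ), r), g z = (‖α‖ : ℂ) ^ 2 := by
    rw [circleIntegral_sum_mul_sub_inv _ _ _ fun j _ => hball j,
      inv_mul_cancel_left₀ Complex.two_pi_I_ne_zero]
    exact_mod_cast (EuclideanSpace.norm_sq_eq α).symm
  calc _ = ‖(2 * Real.pi * Complex.I)⁻¹ • (∮ z in C((c : ℂ), r), f z)
        - (2 * Real.pi * Complex.I)⁻¹ • ∮ z in C((c : ℂ), r), g z‖ := by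
        rw [smul_eq_mul, smul_eq_mul, hg_int]
    _ ≤ r * (2 * ε / d ^ 2 * ‖α‖ ^ 2) :=
        norm_two_pi_I_inv_smul_circleIntegral_sub_le (hd.trans hdr).le hf hg hfg
    _ = 2 * r * ε / d ^ 2 * ‖α‖ ^ 2 := by ring
end
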